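/- Let G be a quasi-optimal 1-plane graph. Then either G is an optimal 1-plane graph, or G = G' ⊖ H, where G' is a quasi-optimal 1-plane graph and H is an optimal 1-plane graph. -/

import Mathlib

/-!
Formalization preamble: plane drawings of simple graphs, 1-plane graphs,
optimal and quasi-optimal 1-plane graphs (Ouyang–Huang–Zhang).
-/

noncomputable section

namespace OnePlanarPaper

/-- Points of the plane. -/
abbrev Pt : Type := ℝ × ℝ

/-- A (good) drawing in the plane of the simple graph `H`, whose relevant
vertices form the set `s`.  Each vertex is placed at a point of the plane and
each edge is drawn as a simple arc joining the placements of its endpoints;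
the interior of an arc avoids all vertex points, two distinct edges share at
most one non-vertex point (and none at all if they are adjacent), and no three
edges pass through a common non-vertex point. -/
structure PlaneDrawing {W : Type*} (H : SimpleGraph W) (s : Set W) where
  support : ∀ ⦃u v : W⦄, H.Adj u v → u ∈ s ∧ v ∈ s
  pos : W → Pt
  pos_injOn : Set.InjOn pos s
  arc : H.edgeSet → ℝ → Pt
  arc_cont : ∀ e, ContinuousOn (arc e) (Set.Icc 0 1)
  arc_injOn : ∀ e, Set.InjOn (arc e) (Set.Icc 0 1)
  arc_ends : ∀ e : H.edgeSet, Sym2.map pos (e : Sym2 W) = s(arc e 0, arc e 1)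
  arc_avoid : ∀ e : H.edgeSet, ∀ t ∈ Set.Ioo (0:ℝ) 1, arc e t ∉ pos '' s
  pair_once : ∀ e f : H.edgeSet, e ≠ f →
    (((arc e '' Set.Icc 0 1) ∩ (arc f '' Set.Icc 0 1)) \ (pos '' s)).Subsingleton
  adj_no_cross : ∀ e f : H.edgeSet, e ≠ f →
    (∃ w : W, w ∈ (e : Sym2 W) ∧ w ∈ (f : Sym2 W)) →
    (((arc e '' Set.Icc 0 1) ∩ (arc f '' Set.Icc 0 1)) \ (pos '' s)) = ∅
  no_triple : ∀ e f g : H.edgeSet, e ≠ f → e ≠ g → f ≠ g →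
    ∀ p : Pt, p ∉ pos '' s →
      ¬(p ∈ arc e '' Set.Icc 0 1 ∧ p ∈ arc f '' Set.Icc 0 1 ∧
        p ∈ arc g '' Set.Icc 0 1)

namespace PlaneDrawing

variable {W : Type*} {H : SimpleGraph W} {sW : Set W}

/-- The set of crossing points between two drawn edges: common points of the
two arcs that are not vertex points. -/
def meets (D : PlaneDrawing H sW) (e f : H.edgeSet) : Set Pt :=
  ((D.arc e '' Set.Icc 0 1) ∩ (D.arc f '' Set.Icc 0 1)) \ (D.pos '' sW)

/-- The set of all crossing points of the drawing. -/
def crossSet (D : PlaneDrawing H sW) : Set Pt :=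
  {p | ∃ e f : H.edgeSet, e ≠ f ∧ p ∈ D.meets e f}

/-- The number of crossings of the drawing. -/
def crossCount (D : PlaneDrawing H sW) : ℕ := D.crossSet.ncard

/-- The drawing is 1-planar: every edge is crossed at most once. -/
def IsOnePlanar (D : PlaneDrawing H sW) : Prop :=
  ∀ e : H.edgeSet, ({p | ∃ f : H.edgeSet, f ≠ e ∧ p ∈ D.meets e f}).Subsingleton

end PlaneDrawing

/-- The crossing number of an abstract graph `H` with vertex set `s`:
the minimum number of crossings over all (good) drawings of `H` in the plane. -/
def crossingNumber {W : Type*} (H : SimpleGraph W) (sW : Set W) : ℕ :=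
  sInf {n | ∃ D : PlaneDrawing H sW, D.crossCount = n}

/-- A 1-plane graph: a graph whose vertices are finitely many points of the
plane, together with a 1-planar drawing placing every vertex at itself. -/
structure OnePlaneGraph where
  verts : Finset Pt
  G : SimpleGraph Pt
  drawing : PlaneDrawing G (↑verts : Set Pt)
  pos_id : drawing.pos = id
  onePlanar : drawing.IsOnePlanar

namespace OnePlaneGraph

/-- The number of crossings in the (given) 1-planar drawing of `P`. -/
def crossCount (P : OnePlaneGraph) : ℕ := P.drawing.crossCount

/-- The number of edges of `P`. -/
def edgeCount (P : OnePlaneGraph) : ℕ := P.G.edgeSet.ncard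

/-- The degree of a vertex of `P`. -/
def degree (P : OnePlaneGraph) (v : Pt) : ℕ := {u : Pt | P.G.Adj v u}.ncard

/-- `P'` extends `P` by adding edges: same vertices, and the arcs of all
edges of `P` are kept unchanged. -/
structure Extends (P' P : OnePlaneGraph) : Prop where
  verts_eq : P'.verts = P.verts
  le : P.G ≤ P'.G
  arc_eq : ∀ (e : Sym2 Pt) (he : e ∈ P.G.edgeSet),
    P'.drawing.arc ⟨e, SimpleGraph.edgeSet_mono le he⟩ = P.drawing.arc ⟨e, he⟩

/-- The 1-plane graph `P` is maximal: no edge between two non-adjacent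
vertices can be added to the drawing without violating 1-planarity
or simplicity. -/
def MaximalOnePlane (P : OnePlaneGraph) : Prop :=
  ∀ u ∈ P.verts, ∀ v ∈ P.verts, u ≠ v → ¬ P.G.Adj u v →
    ∀ P' : OnePlaneGraph,
      P'.G = P.G ⊔ SimpleGraph.fromEdgeSet {s(u, v)} → ¬ P'.Extends P

/-- An optimal 1-plane graph: a maximal 1-plane graph with `4n - 8` edges. -/
def IsOptimal (P : OnePlaneGraph) : Prop :=
  P.MaximalOnePlane ∧ (P.edgeCount : ℤ) = 4 * P.verts.card - 8

/-- `P` is the edge merging `P₁ ⊖ P₂` of the two 1-plane graphs `P₁` and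
`P₂` (both drawn inside `P`, with `P₂` meeting `P₁` precisely along one
common non-crossing edge and its two endpoints). -/
structure IsMergeOf (P P₁ P₂ : OnePlaneGraph) : Prop where
  le₁ : P₁.G ≤ P.G
  le₂ : P₂.G ≤ P.G
  verts_union : P₁.verts ∪ P₂.verts = P.verts
  g_union : P₁.G ⊔ P₂.G = P.G
  arc_eq₁ : ∀ (e : Sym2 Pt) (he : e ∈ P₁.G.edgeSet),
    P.drawing.arc ⟨e, SimpleGraph.edgeSet_mono le₁ he⟩ = P₁.drawing.arc ⟨e, he⟩
  arc_eq₂ : ∀ (e : Sym2 Pt) (he : e ∈ P₂.G.edgeSet),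
    P.drawing.arc ⟨e, SimpleGraph.edgeSet_mono le₂ he⟩ = P₂.drawing.arc ⟨e, he⟩
  no_cross_between : ∀ (e₁ : Sym2 Pt) (h₁ : e₁ ∈ P₁.G.edgeSet)
      (e₂ : Sym2 Pt) (h₂ : e₂ ∈ P₂.G.edgeSet), e₁ ≠ e₂ →
      P.drawing.meets ⟨e₁, SimpleGraph.edgeSet_mono le₁ h₁⟩
        ⟨e₂, SimpleGraph.edgeSet_mono le₂ h₂⟩ = ∅
  shared : ∃ (u v : Pt) (huv : P₁.G.Adj u v), u ≠ v ∧ P₂.G.Adj u v ∧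
    P₁.G.edgeSet ∩ P₂.G.edgeSet = {s(u, v)} ∧
    ((P₁.verts : Set Pt) ∩ (P₂.verts : Set Pt)) = {u, v} ∧
    ∀ f : P.G.edgeSet, (f : Sym2 Pt) ≠ s(u, v) →
      P.drawing.meets ⟨s(u, v), (P.G.mem_edgeSet).mpr (le₁ huv)⟩ f = ∅

/-- Quasi-optimal 1-plane graphs: the smallest class of 1-plane graphs
containing all optimal 1-plane graphs and closed under edge merging of two
members of the class. -/
inductive QuasiOptimal : OnePlaneGraph → Prop
  | of_optimal (P : OnePlaneGraph) : P.IsOptimal → QuasiOptimal P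
  | of_merge (P P₁ P₂ : OnePlaneGraph) : P.IsMergeOf P₁ P₂ →
      QuasiOptimal P₁ → QuasiOptimal P₂ → QuasiOptimal P

/-- Generating sequences: `GenSeq P L` holds when the quasi-optimal 1-plane
graph `P` is built up by edge mergings from the list `L` of optimal 1-plane
graphs. -/
inductive GenSeq : OnePlaneGraph → List OnePlaneGraph → Prop
  | single (P : OnePlaneGraph) : P.IsOptimal → GenSeq P [P]
  | merge (P P₁ P₂ : OnePlaneGraph) (L₁ L₂ : List OnePlaneGraph) :
      P.IsMergeOf P₁ P₂ → GenSeq P₁ L₁ → GenSeq P₂ L₂ → GenSeq P (L₁ ++ L₂)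

/-- The drawn point set of the planarization `P^×`: all vertices together
with all points of all arcs. -/
def drawnSet (P : OnePlaneGraph) : Set Pt :=
  (↑P.verts : Set Pt) ∪ ⋃ e : P.G.edgeSet, P.drawing.arc e '' Set.Icc 0 1

/-- The faces of (the planarization of) `P`: connected components of the
complement of the drawn point set. -/
def faces (P : OnePlaneGraph) : Set (Set Pt) :=
  {F | ∃ p ∉ P.drawnSet, F = connectedComponentIn (P.drawnSet)ᶜ p}

/-- `∂(F)`: the set of vertices of the planarization `P^×` (true vertices and
crossing points) lying on the boundary of the face `F`. -/
def boundaryVerts (P : OnePlaneGraph) (F : Set Pt) : Set Pt :=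
  ((↑P.verts : Set Pt) ∪ P.drawing.crossSet) ∩ closure F

/-- `ε(F)`: the number of true vertices on the boundary of the face `F`. -/
def epsilon (P : OnePlaneGraph) (F : Set Pt) : ℕ :=
  ((↑P.verts : Set Pt) ∩ closure F).ncard

/-- `P` has vertex connectivity at least `k`. -/
def ConnectivityAtLeast (P : OnePlaneGraph) (k : ℕ) : Prop :=
  k < P.verts.card ∧ ∀ S : Finset Pt, S ⊆ P.verts → S.card < k →
    (P.G.induce (↑(P.verts \ S) : Set Pt)).Connected

/-- `P` is an EQ-graph: it can be extended to a quasi-optimal 1-plane graph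
by adding edges. -/
def IsEQ (P : OnePlaneGraph) : Prop :=
  ∃ Q : OnePlaneGraph, Q.Extends P ∧ QuasiOptimal Q

end OnePlaneGraph

/-- The abstract graph `H`, with vertex set `s`, is 1-planar: it admits a
1-planar drawing in the plane. -/
def IsOnePlanarOn {W : Type*} (H : SimpleGraph W) (sW : Set W) : Prop :=
  ∃ (Q : OnePlaneGraph) (φ : W → Pt), Set.InjOn φ sW ∧
    φ '' sW = (↑Q.verts : Set Pt) ∧
    ∀ u ∈ sW, ∀ v ∈ sW, (H.Adj u v ↔ Q.G.Adj (φ u) (φ v))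

/-- The associated graph of a generating sequence: one vertex for each member,
two members adjacent when they share exactly one edge. -/
def assocGraph (L : List OnePlaneGraph) : SimpleGraph (Fin L.length) where
  Adj i j := i ≠ j ∧ ((L.get i).G.edgeSet ∩ (L.get j).G.edgeSet).ncard = 1
  symm := by
    constructor
    intro i j h
    exact ⟨h.1.symm, by rw [Set.inter_comm]; exact h.2⟩
  loopless := by
    constructor
    intro i h
    exact h.1 rfl

end OnePlanarPaper

/-!
If the edge that `P₁` shares with `P₂ = A ⊖ B` lies in `A`, then the part of the drawing
of `P = P₁ ⊖ P₂` spanned by `P₁` and `A` is a 1-plane graph `Q = P₁ ⊖ A`, and `P = Q ⊖ B`: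
edge merging reassociates. The shared edge lies in `A` or in `B`, so by induction on the
derivation of `P₂` the right operand can be shrunk until it is optimal.
-/

namespace OnePlanarPaper

section SetLemmas

variable {α : Type*} {X Y A B : Set α}

theorem inter_eq_of_subset_of_inter_subset (hA : A ⊆ Y) (hXY : X ∩ Y ⊆ A) :
    X ∩ A = X ∩ Y :=
  (Set.inter_subset_inter_right X hA).antisymm fun _ hx => ⟨hx.1, hXY hx⟩

theorem union_inter_eq_of_subset_of_inter_subset (hB : B ⊆ Y) (hXY : X ∩ Y ⊆ A) :
    (X ∪ A) ∩ B = A ∩ B := by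
  rw [Set.union_inter_distrib_right]
  exact Set.union_eq_right.2 fun x hx => ⟨hXY ⟨hx.1, hB hx.2⟩, hx.2⟩

end SetLemmas

namespace PlaneDrawing

variable {W : Type*} {H H' : SimpleGraph W} {s s' : Set W}

theorem meets_comm (D : PlaneDrawing H s) (e f : H.edgeSet) :
    D.meets e f = D.meets f e := by
  rw [meets, meets, Set.inter_comm]

theorem mem_map_pos_of_mem_arc (D : PlaneDrawing H s) {e : H.edgeSet} {p : Pt}
    (hp : p ∈ D.arc e '' Set.Icc 0 1) (hs : p ∈ D.pos '' s) : p ∈ Sym2.map D.pos e := by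
  obtain ⟨t, ⟨ht₀, ht₁⟩, rfl⟩ := hp
  rw [D.arc_ends e]
  rcases ht₀.eq_or_lt with rfl | ht₀
  · exact Sym2.mem_mk_left _ _
  rcases ht₁.eq_or_lt with rfl | ht₁
  · exact Sym2.mem_mk_right _ _
  exact absurd hs (D.arc_avoid e t ⟨ht₀, ht₁⟩)

variable (hle : H' ≤ H) (hs : s' ⊆ s) (hsupp : ∀ ⦃u v : W⦄, H'.Adj u v → u ∈ s' ∧ v ∈ s')
include hle hsupp

theorem notMem_pos_image_of_mem_arc (D : PlaneDrawing H s) (e : H'.edgeSet) {p : Pt}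
    (hp : p ∈ D.arc (Set.inclusion (SimpleGraph.edgeSet_mono hle) e) '' Set.Icc 0 1)
    (hp' : p ∉ D.pos '' s') : p ∉ D.pos '' s := by
  intro hs
  obtain ⟨w, hw, rfl⟩ := Sym2.mem_map.1 (D.mem_map_pos_of_mem_arc hp hs)
  obtain ⟨e, he⟩ := e
  induction e using Sym2.ind with
  | _ x y =>
    rcases Sym2.mem_iff.1 hw with rfl | rfl
    · exact hp' ⟨w, (hsupp he).1, rfl⟩
    · exact hp' ⟨w, (hsupp he).2, rfl⟩

include hs

theorem diff_pos_image_eq_of_subset_arc (D : PlaneDrawing H s) (e : H'.edgeSet) {S : Set Pt}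
    (hS : S ⊆ D.arc (Set.inclusion (SimpleGraph.edgeSet_mono hle) e) '' Set.Icc 0 1) :
    S \ D.pos '' s' = S \ D.pos '' s :=
  Set.Subset.antisymm
    (fun _ hp => ⟨hp.1, notMem_pos_image_of_mem_arc hle hsupp D e (hS hp.1) hp.2⟩)
    (Set.sdiff_subset_sdiff_right (Set.image_mono hs))

def restrict (D : PlaneDrawing H s) : PlaneDrawing H' s' where
  support := hsupp
  pos := D.pos
  pos_injOn := D.pos_injOn.mono hs
  arc e := D.arc (Set.inclusion (SimpleGraph.edgeSet_mono hle) e)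
  arc_cont _ := D.arc_cont _
  arc_injOn _ := D.arc_injOn _
  arc_ends e := D.arc_ends (Set.inclusion _ e)
  arc_avoid e t ht hp := D.arc_avoid _ t ht (Set.image_mono hs hp)
  pair_once e f hef := by
    rw [diff_pos_image_eq_of_subset_arc hle hs hsupp D e Set.inter_subset_left]
    exact D.pair_once _ _ ((Set.inclusion_injective _).ne hef)
  adj_no_cross e f hef hw := by
    rw [diff_pos_image_eq_of_subset_arc hle hs hsupp D e Set.inter_subset_left]
    exact D.adj_no_cross _ _ ((Set.inclusion_injective _).ne hef) hw
  no_triple e f g hef heg hfg p hp hpe :=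
    D.no_triple _ _ _ ((Set.inclusion_injective _).ne hef) ((Set.inclusion_injective _).ne heg)
      ((Set.inclusion_injective _).ne hfg) p
      (notMem_pos_image_of_mem_arc hle hsupp D e hpe.1 hp) hpe

theorem restrict_meets (D : PlaneDrawing H s) (e f : H'.edgeSet) :
    (D.restrict hle hs hsupp).meets e f =
      D.meets (Set.inclusion (SimpleGraph.edgeSet_mono hle) e)
        (Set.inclusion (SimpleGraph.edgeSet_mono hle) f) :=
  diff_pos_image_eq_of_subset_arc hle hs hsupp D e Set.inter_subset_left

theorem IsOnePlanar.restrict {D : PlaneDrawing H s} (hD : D.IsOnePlanar) :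
    (D.restrict hle hs hsupp).IsOnePlanar := fun e =>
  (hD _).anti fun _ ⟨f, hfe, hp⟩ =>
    ⟨_, (Set.inclusion_injective _).ne hfe, restrict_meets hle hs hsupp D e f ▸ hp⟩

end PlaneDrawing

namespace OnePlaneGraph

section Restrict

variable (P : OnePlaneGraph) {V : Finset Pt} {G : SimpleGraph Pt} (hle : G ≤ P.G)
  (hV : V ⊆ P.verts) (hsupp : ∀ ⦃u v : Pt⦄, G.Adj u v → u ∈ (V : Set Pt) ∧ v ∈ (V : Set Pt))

def restrict : OnePlaneGraph where
  verts := V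
  G := G
  drawing := P.drawing.restrict hle (Finset.coe_subset.2 hV) hsupp
  pos_id := P.pos_id
  onePlanar := P.onePlanar.restrict hle (Finset.coe_subset.2 hV) hsupp

theorem restrict_meets (e f : G.edgeSet) :
    (P.restrict hle hV hsupp).drawing.meets e f =
      P.drawing.meets (Set.inclusion (SimpleGraph.edgeSet_mono hle) e)
        (Set.inclusion (SimpleGraph.edgeSet_mono hle) f) :=
  PlaneDrawing.restrict_meets hle (Finset.coe_subset.2 hV) hsupp P.drawing e f

end Restrict

theorem adj_sup_mem_verts_union (P Q : OnePlaneGraph) ⦃u v : Pt⦄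
    (h : (P.G ⊔ Q.G).Adj u v) :
    u ∈ (↑(P.verts ∪ Q.verts) : Set Pt) ∧ v ∈ (↑(P.verts ∪ Q.verts) : Set Pt) := by
  rw [Finset.coe_union]
  rcases h with h | h
  · exact (P.drawing.support h).imp (Or.inl ·) (Or.inl ·)
  · exact (Q.drawing.support h).imp (Or.inr ·) (Or.inr ·)

namespace IsMergeOf

variable {P P₁ P₂ A B : OnePlaneGraph}

theorem symm (m : P.IsMergeOf P₁ P₂) : P.IsMergeOf P₂ P₁ where
  le₁ := m.le₂
  le₂ := m.le₁
  verts_union := Finset.union_comm P₂.verts P₁.verts ▸ m.verts_union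
  g_union := sup_comm P₂.G P₁.G ▸ m.g_union
  arc_eq₁ := m.arc_eq₂
  arc_eq₂ := m.arc_eq₁
  no_cross_between e₂ h₂ e₁ h₁ hne := by
    rw [PlaneDrawing.meets_comm]
    exact m.no_cross_between e₁ h₁ e₂ h₂ hne.symm
  shared := by
    obtain ⟨u, v, huv, hne, hadj, hE, hV, hcross⟩ := m.shared
    exact ⟨u, v, hadj, hne, huv, Set.inter_comm P₁.G.edgeSet _ ▸ hE,
      Set.inter_comm (P₁.verts : Set Pt) _ ▸ hV, hcross⟩

theorem verts_subset_left (m : P.IsMergeOf P₁ P₂) : P₁.verts ⊆ P.verts :=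
  m.verts_union ▸ Finset.subset_union_left

theorem verts_subset_right (m : P.IsMergeOf P₁ P₂) : P₂.verts ⊆ P.verts :=
  m.verts_union ▸ Finset.subset_union_right

theorem edgeSet_eq_union (m : P.IsMergeOf P₁ P₂) :
    P.G.edgeSet = P₁.G.edgeSet ∪ P₂.G.edgeSet :=
  m.g_union ▸ SimpleGraph.edgeSet_sup P₁.G P₂.G

theorem meets_subset_right (m : P.IsMergeOf P₁ P₂) {e f : Sym2 Pt} (he : e ∈ P₂.G.edgeSet)
    (hf : f ∈ P₂.G.edgeSet) :
    P.drawing.meets ⟨e, SimpleGraph.edgeSet_mono m.le₂ he⟩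
        ⟨f, SimpleGraph.edgeSet_mono m.le₂ hf⟩ ⊆
      P₂.drawing.meets ⟨e, he⟩ ⟨f, hf⟩ := by
  rw [PlaneDrawing.meets, PlaneDrawing.meets, m.arc_eq₂, m.arc_eq₂, P.pos_id, P₂.pos_id,
    Set.image_id, Set.image_id]
  exact Set.sdiff_subset_sdiff_right (Finset.coe_subset.2 m.verts_subset_right)

theorem inter_subset_or (m₁ : P.IsMergeOf P₁ P₂) (m₂ : P₂.IsMergeOf A B) :
    P₁.G.edgeSet ∩ P₂.G.edgeSet ⊆ A.G.edgeSet ∨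
      P₁.G.edgeSet ∩ P₂.G.edgeSet ⊆ B.G.edgeSet := by
  obtain ⟨u, v, -, -, huv, hE, -⟩ := m₁.shared
  rw [hE, Set.singleton_subset_iff, Set.singleton_subset_iff, ← Set.mem_union,
    ← m₂.edgeSet_eq_union]
  exact huv

theorem inter_verts_subset (m₁ : P.IsMergeOf P₁ P₂)
    (hsub : P₁.G.edgeSet ∩ P₂.G.edgeSet ⊆ A.G.edgeSet) :
    (P₁.verts : Set Pt) ∩ P₂.verts ⊆ A.verts := by
  obtain ⟨u, v, -, -, -, hE, hV, -⟩ := m₁.shared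
  have huv : A.G.Adj u v := hsub (hE ▸ Set.mem_singleton _)
  rw [hV]
  exact Set.insert_subset (A.drawing.support huv).1
    (Set.singleton_subset_iff.2 (A.drawing.support huv).2)

variable (m₁ : P.IsMergeOf P₁ P₂) (m₂ : P₂.IsMergeOf A B)

/-- `P₁ ⊖ A`, drawn as a part of `P = P₁ ⊖ (A ⊖ B)`. -/
def leftMerge : OnePlaneGraph :=
  P.restrict (sup_le m₁.le₁ (m₂.le₁.trans m₁.le₂))
    (Finset.union_subset m₁.verts_subset_left
      (m₂.verts_subset_left.trans m₁.verts_subset_right))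
    (adj_sup_mem_verts_union P₁ A)

variable (hsub : P₁.G.edgeSet ∩ P₂.G.edgeSet ⊆ A.G.edgeSet)
include hsub

theorem leftMerge_isMergeOf : (leftMerge m₁ m₂).IsMergeOf P₁ A where
  le₁ := le_sup_left
  le₂ := le_sup_right
  verts_union := rfl
  g_union := rfl
  arc_eq₁ := m₁.arc_eq₁
  arc_eq₂ e he :=
    (m₁.arc_eq₂ e (SimpleGraph.edgeSet_mono m₂.le₁ he)).trans (m₂.arc_eq₁ e he)
  no_cross_between e₁ h₁ e₂ h₂ hne := (P.restrict_meets _ _ _ _ _).trans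
    (m₁.no_cross_between e₁ h₁ e₂ (SimpleGraph.edgeSet_mono m₂.le₁ h₂) hne)
  shared := by
    obtain ⟨u, v, huv, hne, -, hE, hV, hcross⟩ := m₁.shared
    refine ⟨u, v, huv, hne, hsub (hE ▸ Set.mem_singleton _), ?_, ?_, fun f hf =>
      (P.restrict_meets _ _ _ _ _).trans (hcross _ hf)⟩
    · rw [inter_eq_of_subset_of_inter_subset (SimpleGraph.edgeSet_mono m₂.le₁) hsub, hE]
    · rw [inter_eq_of_subset_of_inter_subset (Finset.coe_subset.2 m₂.verts_subset_left)
        (m₁.inter_verts_subset hsub), hV]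

theorem isMergeOf_leftMerge : P.IsMergeOf (leftMerge m₁ m₂) B where
  le₁ := sup_le m₁.le₁ (m₂.le₁.trans m₁.le₂)
  le₂ := m₂.le₂.trans m₁.le₂
  verts_union := by
    rw [leftMerge, restrict, Finset.union_assoc, m₂.verts_union, m₁.verts_union]
  g_union := by
    rw [leftMerge, restrict, sup_assoc, m₂.g_union, m₁.g_union]
  arc_eq₁ _ _ := rfl
  arc_eq₂ e he :=
    (m₁.arc_eq₂ e (SimpleGraph.edgeSet_mono m₂.le₂ he)).trans (m₂.arc_eq₂ e he)
  no_cross_between e₁ h₁ e₂ h₂ hne := by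
    rcases (SimpleGraph.edgeSet_sup P₁.G A.G ▸ h₁ : e₁ ∈ P₁.G.edgeSet ∪ A.G.edgeSet)
      with h₁ | h₁
    · exact m₁.no_cross_between e₁ h₁ e₂ (SimpleGraph.edgeSet_mono m₂.le₂ h₂) hne
    · exact Set.subset_eq_empty
        (m₁.meets_subset_right (SimpleGraph.edgeSet_mono m₂.le₁ h₁)
          (SimpleGraph.edgeSet_mono m₂.le₂ h₂))
        (m₂.no_cross_between e₁ h₁ e₂ h₂ hne)
  shared := by
    obtain ⟨a, b, hab, hne, hadj, hE, hV, hcross⟩ := m₂.shared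
    have hab₂ : s(a, b) ∈ P₂.G.edgeSet := SimpleGraph.edgeSet_mono m₂.le₁ hab
    refine ⟨a, b, Or.inr hab, hne, hadj, ?_, ?_, fun f hf => ?_⟩
    · rw [leftMerge, restrict, SimpleGraph.edgeSet_sup,
        union_inter_eq_of_subset_of_inter_subset (SimpleGraph.edgeSet_mono m₂.le₂) hsub, hE]
    · rw [leftMerge, restrict, Finset.coe_union,
        union_inter_eq_of_subset_of_inter_subset (Finset.coe_subset.2 m₂.verts_subset_right)
          (m₁.inter_verts_subset hsub), hV]
    · rcases (m₁.edgeSet_eq_union ▸ f.2 : (f : Sym2 Pt) ∈ P₁.G.edgeSet ∪ P₂.G.edgeSet)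
        with hf₁ | hf₂
      · rw [PlaneDrawing.meets_comm]
        exact m₁.no_cross_between f hf₁ s(a, b) hab₂ hf
      · exact Set.subset_eq_empty (m₁.meets_subset_right hab₂ hf₂) (hcross ⟨f, hf₂⟩ hf)

end IsMergeOf

theorem QuasiOptimal.exists_isMergeOf_optimal {P₂ : OnePlaneGraph} (h₂ : QuasiOptimal P₂) :
    ∀ {P P₁ : OnePlaneGraph}, P.IsMergeOf P₁ P₂ → QuasiOptimal P₁ →
      ∃ Q H : OnePlaneGraph, QuasiOptimal Q ∧ H.IsOptimal ∧ P.IsMergeOf Q H := by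
  induction h₂ with
  | of_optimal P₂ hopt => exact fun m h₁ => ⟨_, P₂, h₁, hopt, m⟩
  | of_merge P₂ A B m₂ hA hB ihA ihB =>
    intro P P₁ m₁ h₁
    rcases m₁.inter_subset_or m₂ with hsub | hsub
    · exact ihB (m₁.isMergeOf_leftMerge m₂ hsub)
        (.of_merge _ _ _ (m₁.leftMerge_isMergeOf m₂ hsub) h₁ hA)
    · exact ihA (m₁.isMergeOf_leftMerge m₂.symm hsub)
        (.of_merge _ _ _ (m₁.leftMerge_isMergeOf m₂.symm hsub) h₁ hB)

end OnePlaneGraph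

end OnePlanarPaper

namespace OnePlanarPaper
open OnePlaneGraph

/-- Proposition 2.3 (ii).  A quasi-optimal 1-plane graph is
either optimal, or the edge merging `G' ⊖ H` of a quasi-optimal 1-plane graph
`G'` and an optimal 1-plane graph `H`. -/
theorem quasiOptimal_cases (P : OnePlaneGraph) (hq : QuasiOptimal P) :
    P.IsOptimal ∨
      ∃ P' H : OnePlaneGraph, QuasiOptimal P' ∧ H.IsOptimal ∧
        P.IsMergeOf P' H := by
  cases hq with
  | of_optimal _ hopt => exact .inl hopt
  | of_merge _ P₁ P₂ m h₁ h₂ => exact .inr (h₂.exists_isMergeOf_optimal m h₁)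

end OnePlanarPaper
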